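/- arXiv:0708.0714 — 4 statements merged into one kernel-verified Lean document; each statement's English description precedes it below -/
import Mathlib

section
/- The minimal faithful permutation degree of a non-trivial finite abelian group A, with direct product decomposition A ≅ A₁ × ... × Aₙ into non-trivial cyclic groups of prime power orders a₁, ..., aₙ, equals a₁ + ... + aₙ. -/
open Multiplicative

/-- Cyclic group of order m, multiplicatively. -/
abbrev Cyc (m : ℕ) := Multiplicative (ZMod m)

/-- Minimal faithful permutation degree. -/
noncomputable def mu (G : Type*) [Group G] : ℕ :=
  sInf {n | ∃ f : G →* Equiv.Perm (Fin n), Function.Injective f}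

/-!
Upper bound: `∏ Cyc aᵢ` acts faithfully on the disjoint union of its factors, each factor by
translation.

Lower bound: the stabilizers `Kⱼ` of orbit representatives of a faithful action of `A` intersect
trivially, and the degree is `∑ [A : Kⱼ]`; so it suffices to show `∑ aᵢ ≤ ∑ [A : Kⱼ]` whenever
`⋂ Kⱼ = 1`. Let `x` generate a factor of largest order `a = p ^ (k + 1)`. Some `Kⱼ` misses
`x ^ p ^ k`, hence meets `⟨x⟩` trivially. As `x` has maximal `p`-power order, the structure theorem
applied to `A ⧸ Kⱼ` yields a complement `B ⊇ Kⱼ` of `⟨x⟩`, and `B ≅ ∏_{i ≠ i₀} Cyc aᵢ`. Induction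
for `B` and the `Kₗ ∩ B` concludes, since `[A : Kⱼ] = a [B : Kⱼ] ≥ a + [B : Kⱼ]` when
`[B : Kⱼ] ≥ 2`, while `Kⱼ` can be dropped from the family when `Kⱼ = B`.
-/

open Subgroup

section Mu

variable {G H : Type*} [Group G] [Group H]

theorem mu_le_card_of_injective {X : Type*} [Fintype X] (f : G →* Equiv.Perm X)
    (hf : Function.Injective f) : mu G ≤ Fintype.card X :=
  Nat.sInf_le ⟨(Fintype.equivFin X).permCongrHom.toMonoidHom.comp f,
    (Fintype.equivFin X).permCongrHom.injective.comp hf⟩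

theorem exists_injective_perm_fin_mu [Finite G] :
    ∃ f : G →* Equiv.Perm (Fin (mu G)), Function.Injective f := by
  have := Fintype.ofFinite G
  exact Nat.sInf_mem (s := {n | ∃ f : G →* Equiv.Perm (Fin n), Function.Injective f})
    ⟨_, (Fintype.equivFin G).permCongrHom.toMonoidHom.comp (MulAction.toPermHom G G),
      (Fintype.equivFin G).permCongrHom.injective.comp (MulAction.toPerm_injective (α := G))⟩

theorem mu_le_natCard [Finite G] : mu G ≤ Nat.card G := by
  have := Fintype.ofFinite G
  simpa [Nat.card_eq_fintype_card] using
    mu_le_card_of_injective (MulAction.toPermHom G G) (MulAction.toPerm_injective (α := G))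

theorem mu_le_mu_of_injective [Finite H] (f : G →* H) (hf : Function.Injective f) :
    mu G ≤ mu H := by
  obtain ⟨g, hg⟩ := exists_injective_perm_fin_mu (G := H)
  simpa using mu_le_card_of_injective (g.comp f) (hg.comp hf)

theorem mu_pi_le {ι : Type*} [Fintype ι] (G : ι → Type*) [∀ i, Group (G i)] [∀ i, Finite (G i)] :
    mu (∀ i, G i) ≤ ∑ i, mu (G i) := by
  choose f hf using fun i => exists_injective_perm_fin_mu (G := G i)
  let F := (Equiv.Perm.sigmaCongrRightHom fun i => Fin (mu (G i))).comp
    (MonoidHom.pi fun i => (f i).comp (Pi.evalMonoidHom G i))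
  have hF : Function.Injective F := Equiv.Perm.sigmaCongrRightHom_injective.comp
    fun x y hxy => funext fun i => hf i (congrFun hxy i)
  simpa using mu_le_card_of_injective F hF

end Mu

section OrderOf

variable {ι : Type*} {M : ι → Type*} [∀ i, Monoid (M i)] {p k : ℕ} [hp : Fact p.Prime]

theorem Pi.exists_orderOf_apply_eq_prime_pow {y : ∀ i, M i} (hy : orderOf y = p ^ (k + 1)) :
    ∃ i, orderOf (y i) = p ^ (k + 1) := by
  have hne : y ^ p ^ k ≠ 1 :=
    pow_ne_one_of_lt_orderOf (pow_ne_zero _ hp.out.ne_zero)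
      (hy ▸ Nat.pow_lt_pow_right hp.out.one_lt k.lt_succ_self)
  obtain ⟨i, hi⟩ := Function.ne_iff.1 hne
  refine ⟨i, orderOf_eq_prime_pow hi ?_⟩
  rw [← Pi.pow_apply, ← hy, pow_orderOf_eq_one, Pi.one_apply]

theorem Pi.exists_prime_pow_dvd_orderOf_apply {y : ∀ i, M i} (hy : orderOf y ≠ 0)
    (h : p ^ (k + 1) ∣ orderOf y) : ∃ i, p ^ (k + 1) ∣ orderOf (y i) := by
  obtain ⟨i, hi⟩ := Pi.exists_orderOf_apply_eq_prime_pow (orderOf_pow_orderOf_div hy h)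
  exact ⟨i, hi ▸ orderOf_pow_dvd _⟩

end OrderOf

theorem Nat.eq_prime_pow_of_dvd_of_not_dvd {p q k e : ℕ} (hp : p.Prime) (hq : q.Prime)
    (h : p ^ (k + 1) ∣ q ^ e) (h' : ¬ p ^ (k + 2) ∣ q ^ e) : q ^ e = p ^ (k + 1) := by
  obtain rfl : p = q := (Nat.prime_dvd_prime_iff_eq hp hq).1
    (hp.dvd_of_dvd_pow ((dvd_pow_self p k.succ_ne_zero).trans h))
  rw [Nat.pow_dvd_pow_iff_le_right hp.one_lt] at h h'
  rw [show e = k + 1 by omega]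

theorem CommGroup.exists_monoidHom_zmod_orderOf_eq {Q : Type*} [CommGroup Q] [Finite Q]
    {p k : ℕ} [hp : Fact p.Prime] {x : Q} (hx : orderOf x = p ^ (k + 1))
    (hmax : ∀ y : Q, ¬ p ^ (k + 2) ∣ orderOf y) :
    ∃ χ : Q →* Multiplicative (ZMod (p ^ (k + 1))), orderOf (χ x) = p ^ (k + 1) := by
  classical
  obtain ⟨ι, _, q, hq, e, ⟨F⟩⟩ := AddCommGroup.equiv_directSum_zmod_of_finite (Additive Q)
  let F' : Q ≃* ∀ t, Multiplicative (ZMod (q t ^ e t)) := MulEquiv.toAdditive.symm <|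
    F.trans <| (DirectSum.addEquivProd _).trans (MulEquiv.piMultiplicative _).toAdditiveRight
  obtain ⟨t, ht⟩ :=
    Pi.exists_orderOf_apply_eq_prime_pow (y := F' x) (by rwa [MulEquiv.orderOf_eq])
  have hcard : q t ^ e t = p ^ (k + 1) := by
    refine Nat.eq_prime_pow_of_dvd_of_not_dvd hp.out (hq t) ?_ fun h => hmax
      (F'.symm (Pi.mulSingle t (ofAdd 1))) ?_
    · have := orderOf_dvd_natCard (F' x t)
      rwa [ht, show Nat.card (Multiplicative (ZMod (q t ^ e t))) = q t ^ e t from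
        Nat.card_zmod _] at this
    · simpa [MulEquiv.orderOf_eq, orderOf_piMulSingle, orderOf_ofAdd_eq_addOrderOf,
        ZMod.addOrderOf_one] using h
  refine ⟨(ZMod.ringEquivCongr hcard).toAddEquiv.toMultiplicative.toMonoidHom.comp
    ((Pi.evalMonoidHom _ t).comp F'.toMonoidHom), ?_⟩
  exact (MulEquiv.orderOf_eq (AddEquiv.toMultiplicative (ZMod.ringEquivCongr hcard).toAddEquiv)
    (F' x t)).trans ht

namespace Subgroup

variable {G : Type*} [Group G]

theorem isComplement'_zpowers_ker {C : Type*} [Group C] {x : G} (χ : G →* C)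
    (hord : orderOf (χ x) = orderOf x) (hgen : zpowers (χ x) = ⊤) :
    IsComplement' (zpowers x) χ.ker := by
  refine isComplement'_of_disjoint_and_mul_eq_univ ?_ ?_
  · rw [disjoint_iff_inf_le]
    rintro _ ⟨⟨m, rfl⟩, hm⟩
    rw [mem_bot, ← orderOf_dvd_iff_zpow_eq_one, ← hord, orderOf_dvd_iff_zpow_eq_one, ← map_zpow]
    exact hm
  · refine Set.eq_univ_of_forall fun y => ?_
    obtain ⟨m, hm⟩ := mem_zpowers_iff.1 (hgen ▸ mem_top (χ y))
    refine ⟨x ^ m, zpow_mem_zpowers x m, (x ^ m)⁻¹ * y, ?_, mul_inv_cancel_left _ _⟩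
    rw [SetLike.mem_coe, MonoidHom.mem_ker, map_mul, map_inv, map_zpow, hm, inv_mul_cancel]

theorem IsComplement'.bijective_domRestrict {P : Type*} [Group P] {H B : Subgroup G}
    (h : IsComplement' H B) (π : G →* P) (hπ : Function.Surjective π) (hker : π.ker = H) :
    Function.Bijective (π.domRestrict B) := by
  refine ⟨(injective_iff_map_eq_one _).2 fun b hb => ?_, fun c => ?_⟩
  · have hbH : (b : G) ∈ H := hker ▸ hb
    exact Subtype.ext (disjoint_iff_inf_le.1 h.disjoint ⟨hbH, b.2⟩)
  · obtain ⟨g, rfl⟩ := hπ c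
    obtain ⟨⟨u, b⟩, hub⟩ := h.2 g
    refine ⟨b, ?_⟩
    have hu : π u = 1 := (hker ▸ u.2 : (u : G) ∈ π.ker)
    simp only [MonoidHom.domRestrict_apply, ← hub, map_mul, hu, one_mul]

end Subgroup

theorem exists_isComplement'_zpowers_of_pow_notMem {A : Type*} [CommGroup A] [Finite A]
    {p k : ℕ} [Fact p.Prime] {x : A} (hx : orderOf x = p ^ (k + 1))
    (hmax : ∀ y : A, ¬ p ^ (k + 2) ∣ orderOf y) {K : Subgroup A} (hxK : x ^ p ^ k ∉ K) :
    ∃ B : Subgroup A, K ≤ B ∧ IsComplement' (zpowers x) B := by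
  have hx' : orderOf (x : A ⧸ K) = p ^ (k + 1) := by
    refine orderOf_eq_prime_pow (fun h => hxK ?_) ?_
    · rwa [← QuotientGroup.mk_pow, QuotientGroup.eq_one_iff] at h
    · rw [← QuotientGroup.mk_pow, ← hx, pow_orderOf_eq_one, QuotientGroup.mk_one]
  obtain ⟨χ, hχ⟩ := CommGroup.exists_monoidHom_zmod_orderOf_eq hx' fun y hy => by
    obtain ⟨y, rfl⟩ := QuotientGroup.mk_surjective y
    exact hmax y (hy.trans (orderOf_map_dvd (QuotientGroup.mk' K) y))
  let χ' := χ.comp (QuotientGroup.mk' K)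
  refine ⟨χ'.ker, fun y hy => ?_, isComplement'_zpowers_ker χ' (hχ.trans hx.symm) ?_⟩
  · simp [χ', (QuotientGroup.eq_one_iff y).2 hy]
  · refine eq_top_of_card_eq _ ?_
    rw [Nat.card_zpowers]
    exact hχ.trans (Nat.card_zmod _).symm

theorem Pi.ker_monoidHom_pi_eval_ne_eq_zpowers {ι : Type*} [DecidableEq ι] {M : ι → Type*}
    [∀ i, Group (M i)] {i₀ : ι} {g : M i₀} (hg : zpowers g = ⊤) :
    (MonoidHom.pi fun j : {j // j ≠ i₀} => Pi.evalMonoidHom M j).ker =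
      zpowers (Pi.mulSingle i₀ g) := by
  ext f
  constructor
  · intro hf
    obtain ⟨m, hm⟩ := mem_zpowers_iff.1 (hg ▸ mem_top (f i₀))
    refine ⟨m, funext fun i => ?_⟩
    rcases eq_or_ne i i₀ with rfl | hi
    · simp [hm]
    · simpa [Pi.mulSingle_eq_of_ne hi] using (congrFun hf ⟨i, hi⟩).symm
  · rintro ⟨m, rfl⟩
    funext j
    simp [Pi.mulSingle_eq_of_ne j.2]

theorem Cyc.zpowers_ofAdd_one_eq_top (n : ℕ) [NeZero n] : zpowers (ofAdd 1 : Cyc n) = ⊤ :=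
  eq_top_of_card_eq _ <| by
    rw [Nat.card_zpowers, orderOf_ofAdd_eq_addOrderOf, ZMod.addOrderOf_one]
    exact (Nat.card_zmod n).symm

theorem Subgroup.IsComplement'.nonempty_mulEquiv_pi_subtype_ne {ι : Type*} [DecidableEq ι]
    {a : ι → ℕ} [∀ i, NeZero (a i)] {A : Type*} [Group A] (e : A ≃* ∀ i, Cyc (a i)) (i₀ : ι)
    {B : Subgroup A} (hB : IsComplement' (zpowers (e.symm (Pi.mulSingle i₀ (ofAdd 1)))) B) :
    Nonempty (B ≃* ∀ i : {i // i ≠ i₀}, Cyc (a i)) := by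
  let π := (MonoidHom.pi fun j : {j // j ≠ i₀} => Pi.evalMonoidHom (fun i => Cyc (a i)) j).comp
    e.toMonoidHom
  have hπ : Function.Surjective π := fun f =>
    ⟨e.symm fun i => if hi : i = i₀ then 1 else f ⟨i, hi⟩, funext fun j => by simp [π, j.2]⟩
  have hker : π.ker = zpowers (e.symm (Pi.mulSingle i₀ (ofAdd 1))) := by
    rw [← MonoidHom.comap_ker,
      Pi.ker_monoidHom_pi_eval_ne_eq_zpowers (Cyc.zpowers_ofAdd_one_eq_top _),
      comap_equiv_eq_map_symm', MonoidHom.map_zpowers]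
    rfl
  exact ⟨MulEquiv.ofBijective _ (hB.bijective_domRestrict π hπ hker)⟩

theorem prime_pow_not_dvd_orderOf_of_lt {ι : Type*} [Fintype ι] {a : ι → ℕ} [∀ i, NeZero (a i)]
    {A : Type*} [Group A] (e : A ≃* ∀ i, Cyc (a i)) {p k : ℕ} [Fact p.Prime]
    (h : ∀ i, a i < p ^ (k + 1)) (y : A) : ¬ p ^ (k + 1) ∣ orderOf y := by
  intro hdvd
  rw [← MulEquiv.orderOf_eq e] at hdvd
  obtain ⟨i, hi⟩ := Pi.exists_prime_pow_dvd_orderOf_apply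
    (isOfFinOrder_of_finite (e y)).orderOf_pos.ne' hdvd
  have hcard : orderOf (e y i) ∣ a i := by
    have := orderOf_dvd_natCard (e y i)
    rwa [show Nat.card (Cyc (a i)) = a i from Nat.card_zmod _] at this
  exact (h i).not_ge (Nat.le_of_dvd (NeZero.pos _) (hi.trans hcard))

theorem index_add_le_sum_index {A J : Type*} [Group A] [Finite A] {s : Finset J}
    {K : J → Subgroup A} (hK : ⨅ l ∈ s, K l = ⊥) {B : Subgroup A} {j : J} (hj : j ∈ s)
    (hKB : K j ≤ B) (hB : 2 ≤ B.index) {m : ℕ}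
    (hm : ∀ t ⊆ s, ⨅ l ∈ t, (K l).subgroupOf B = ⊥ → m ≤ ∑ l ∈ t, (K l).relIndex B) :
    B.index + m ≤ ∑ l ∈ s, (K l).index := by
  classical
  have hrel : ∑ l ∈ s.erase j, (K l).relIndex B ≤ ∑ l ∈ s.erase j, (K l).index :=
    Finset.sum_le_sum fun l _ => relIndex_top_right (K l) ▸
      relIndex_le_of_le_right le_top (by rw [relIndex_top_right]; exact index_ne_zero_of_finite)
  have hKj : (K j).relIndex B * B.index = (K j).index := relIndex_mul_index hKB
  have hinf : ⨅ l ∈ s, (K l).subgroupOf B = ⊥ := by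
    simp only [subgroupOf, ← comap_iInf, hK]
    exact bot_subgroupOf B
  rw [← Finset.add_sum_erase s _ hj]
  rcases eq_or_ne ((K j).relIndex B) 1 with h1 | h1
  · rw [← Finset.insert_erase hj, Finset.iInf_insert, subgroupOf_eq_top.2 (relIndex_eq_one.1 h1),
      top_inf_eq] at hinf
    have := hm _ (Finset.erase_subset j s) hinf
    rw [h1, one_mul] at hKj
    omega
  · have := hm s subset_rfl hinf
    rw [← Finset.add_sum_erase s _ hj] at this
    have h2 : 2 ≤ (K j).relIndex B := by
      have : (K j).relIndex B ≠ 0 := index_ne_zero_of_finite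
      omega
    nlinarith

theorem sum_le_sum_index {ι : Type*} [Fintype ι] {a : ι → ℕ} (ha : ∀ i, IsPrimePow (a i))
    {A : Type*} [CommGroup A] [Finite A] (e : A ≃* ∀ i, Cyc (a i)) {J : Type*} (s : Finset J)
    (K : J → Subgroup A) (hK : ⨅ j ∈ s, K j = ⊥) : ∑ i, a i ≤ ∑ j ∈ s, (K j).index := by
  classical
  induction h : Fintype.card ι using Nat.strong_induction_on generalizing ι A s with
  | _ N ih =>
  rcases isEmpty_or_nonempty ι with hι | hι
  · simp
  have : ∀ i, NeZero (a i) := fun i => ⟨(ha i).ne_zero⟩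
  obtain ⟨i₀, -, hi₀⟩ := Finset.exists_max_image Finset.univ a Finset.univ_nonempty
  obtain ⟨p, k, hp, hk, hpk⟩ := (isPrimePow_nat_iff _).1 (ha i₀)
  obtain ⟨k, rfl⟩ := Nat.exists_eq_add_one_of_ne_zero hk.ne'
  have : Fact p.Prime := ⟨hp⟩
  set x := e.symm (Pi.mulSingle i₀ (ofAdd 1))
  have hx : orderOf x = p ^ (k + 1) := by
    rw [hpk, MulEquiv.orderOf_eq, orderOf_piMulSingle, orderOf_ofAdd_eq_addOrderOf,
      ZMod.addOrderOf_one]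
  have hmax := prime_pow_not_dvd_orderOf_of_lt e (k := k + 1) fun i =>
    (hi₀ i (Finset.mem_univ i)).trans_lt
      (hpk ▸ Nat.pow_lt_pow_right hp.one_lt (k + 1).lt_succ_self)
  obtain ⟨j, hj, hxj⟩ : ∃ j ∈ s, x ^ p ^ k ∉ K j := by
    by_contra! hall
    have : x ^ p ^ k ∈ ⨅ j ∈ s, K j := by simpa only [mem_iInf] using hall
    rw [hK, mem_bot] at this
    exact pow_ne_one_of_lt_orderOf (pow_ne_zero _ hp.ne_zero)
      (hx ▸ Nat.pow_lt_pow_right hp.one_lt k.lt_succ_self) this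
  obtain ⟨B, hKB, hB⟩ := exists_isComplement'_zpowers_of_pow_notMem hx hmax hxj
  obtain ⟨eB⟩ := hB.nonempty_mulEquiv_pi_subtype_ne e i₀
  have hBidx : B.index = a i₀ := by rw [hB.index_eq_card, Nat.card_zpowers, hx, hpk]
  rw [Fintype.sum_eq_add_sum_subtype_ne _ i₀, ← hBidx]
  have hcard : Fintype.card {i // i ≠ i₀} < N :=
    (Fintype.card_subtype_lt (p := fun i => i ≠ i₀) (x := i₀) (by simp)).trans_eq h
  exact index_add_le_sum_index hK hj hKB (hBidx ▸ (ha i₀).two_le) fun t _ ht =>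
    ih _ hcard (ι := {i // i ≠ i₀}) (a := fun i => a i) (fun i => ha i) eB t _ ht rfl

open MulAction in
theorem sum_le_card_of_faithfulSMul {ι : Type*} [Fintype ι] {a : ι → ℕ}
    (ha : ∀ i, IsPrimePow (a i)) {A : Type*} [CommGroup A] [Finite A] (e : A ≃* ∀ i, Cyc (a i))
    {X : Type*} [Finite X] [MulAction A X] [FaithfulSMul A X] : ∑ i, a i ≤ Nat.card X := by
  have := Fintype.ofFinite (orbitRel.Quotient A X)
  have hK : ⨅ ω ∈ (Finset.univ : Finset (orbitRel.Quotient A X)), stabilizer A ω.out = ⊥ := by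
    refine eq_bot_iff.2 fun g hg => mem_bot.2 <| eq_of_smul_eq_smul (α := X) fun y => ?_
    simp only [mem_iInf, Finset.mem_univ, forall_const, mem_stabilizer_iff] at hg
    obtain ⟨h, hh⟩ : y ∈ orbit A (Quotient.mk'' y : orbitRel.Quotient A X).out :=
      mem_orbit_symm.1 (orbitRel_apply.1 (Quotient.exact' (Quotient.out_eq' _)))
    rw [one_smul, ← hh, smul_comm, hg]
  refine (sum_le_sum_index ha e Finset.univ _ hK).trans_eq ?_
  rw [Nat.card_congr (selfEquivSigmaOrbitsQuotientStabilizer A X), Nat.card_sigma]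
  simp [index_eq_card]

theorem sum_le_mu {ι : Type*} [Fintype ι] {a : ι → ℕ} (ha : ∀ i, IsPrimePow (a i))
    {A : Type*} [CommGroup A] [Finite A] (e : A ≃* ∀ i, Cyc (a i)) : ∑ i, a i ≤ mu A := by
  obtain ⟨f, hf⟩ := exists_injective_perm_fin_mu (G := A)
  let := MulAction.compHom (Fin (mu A)) f
  have : FaithfulSMul A (Fin (mu A)) := ⟨fun h => hf (Equiv.ext h)⟩
  simpa using sum_le_card_of_faithfulSMul ha e (X := Fin (mu A))

theorem stmt0_general (A : Type*) [CommGroup A] [Finite A]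
    (n : ℕ) (a p k : Fin n → ℕ)
    (hp : ∀ i, (p i).Prime) (hk : ∀ i, 1 ≤ k i) (ha : ∀ i, a i = p i ^ k i)
    (e : A ≃* ((i : Fin n) → Cyc (a i))) :
    mu A = ∑ i, a i := by
  have hpow : ∀ i, IsPrimePow (a i) := fun i =>
    (isPrimePow_nat_iff _).2 ⟨p i, k i, hp i, hk i, (ha i).symm⟩
  have : ∀ i, NeZero (a i) := fun i => ⟨(hpow i).ne_zero⟩
  refine le_antisymm ?_ (sum_le_mu hpow e)
  calc mu A ≤ mu (∀ i, Cyc (a i)) := mu_le_mu_of_injective e.toMonoidHom e.injective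
    _ ≤ ∑ i, mu (Cyc (a i)) := mu_pi_le _
    _ ≤ ∑ i, a i := Finset.sum_le_sum fun i _ => mu_le_natCard.trans_eq (Nat.card_zmod _)

theorem stmt0 (A : Type*) [CommGroup A] [Finite A] [Nontrivial A]
    (n : ℕ) (a p k : Fin n → ℕ)
    (hp : ∀ i, (p i).Prime) (hk : ∀ i, 1 ≤ k i) (ha : ∀ i, a i = p i ^ k i)
    (e : A ≃* ((i : Fin n) → Cyc (a i))) :
    mu A = ∑ i, a i :=
  stmt0_general A n a p k hp hk ha e
end

section
/- In the group G = ⟨x,y,a,b | x⁴=y⁴=b³=a²=1, xy=yx, xᵃ=y, xᵇ=y, yᵇ=x⁻¹y⁻¹, bᵃ=b⁻¹⟩ (isomorphic to G(4,4,3), of order 96), the subgroup M = ⟨x², y²⟩ is the unique minimal normal subgroup of G; i.e., M is normal in G and every non-trivial normal subgroup of G contains M. -/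
/-!
Write `pairPow x y (p, q) = x ^ p * y ^ q` for `(p, q) ∈ (ℤ/4)²`. Conjugation by `a` and `b` acts
on these exponent vectors by the swap and by the order-three matrix `rot`, and every element of
`G` is `pairPow x y u * b ^ l * a ^ k`. A nontrivial normal subgroup `N` therefore contains either
a nonzero vector or an element acting nontrivially on `⟨x, y⟩`; in the second case its commutator
with a moved vector is a nonzero vector of `N`. For a nonzero `u ∈ (ℤ/4)²`, either `u` or `2u` is
one of `(2, 0), (0, 2), (2, 2)`, which `rot` permutes cyclically; hence `x ^ 2, y ^ 2 ∈ N`.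
Normality of `⟨x ^ 2, y ^ 2⟩` holds because the action is additive, so it preserves doubled
vectors.
-/

open Multiplicative

open Subgroup

section General

variable {G : Type*} [Group G]

theorem Subgroup.closure_normal_of_conj_mem {s : Set G}
    (h : ∀ g : G, ∀ n ∈ s, g⁻¹ * n * g ∈ closure s) : (closure s).Normal := by
  suffices hs : normalClosure s = closure s from hs ▸ normalClosure_normal
  refine le_antisymm ((closure_le _).2 fun c hc ↦ ?_) closure_le_normalClosure
  obtain ⟨n, hn, g, rfl⟩ := by simpa only [Group.mem_conjugatesOfSet_iff, isConj_iff] using hc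
  simpa using h g⁻¹ n hn

theorem conj_pow_eq_of_conj {α : Type*} {φ : α → G} {f : α → α} {g : G}
    (h : ∀ v, g⁻¹ * φ v * g = φ (f v)) (m : ℕ) (v : α) :
    (g ^ m)⁻¹ * φ v * g ^ m = φ (f^[m] v) := by
  induction m generalizing v with
  | zero => simp
  | succ m ih => rw [pow_succ', Function.iterate_succ_apply, ← ih, ← h]; group

theorem pow_zmod_val_add {n : ℕ} [NeZero n] {g : G} (hg : g ^ n = 1) (i j : ZMod n) :
    g ^ (i + j).val = g ^ i.val * g ^ j.val := by
  rw [ZMod.val_add, ← pow_eq_pow_mod _ hg, pow_add]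

theorem pow_zmod_val_neg {n : ℕ} [NeZero n] {g : G} (hg : g ^ n = 1) (i : ZMod n) :
    g ^ (-i).val = (g ^ i.val)⁻¹ := by
  rw [eq_inv_iff_mul_eq_one, ← pow_zmod_val_add hg, neg_add_cancel, ZMod.val_zero, pow_zero]

def pairPow {n : ℕ} (x y : G) (u : ZMod n × ZMod n) : G := x ^ u.1.val * y ^ u.2.val

section PairPow

variable {n : ℕ} {x y : G}

@[simp]
theorem pairPow_zero : pairPow x y (0 : ZMod n × ZMod n) = 1 := by simp [pairPow]

theorem pairPow_one_zero : pairPow x y ((1, 0) : ZMod 4 × ZMod 4) = x := by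
  simp [pairPow, show (1 : ZMod 4).val = 1 from rfl]

theorem pairPow_zero_one : pairPow x y ((0, 1) : ZMod 4 × ZMod 4) = y := by
  simp [pairPow, show (1 : ZMod 4).val = 1 from rfl]

theorem pairPow_two_zero : pairPow x y ((2, 0) : ZMod 4 × ZMod 4) = x ^ 2 := by
  simp [pairPow, show (2 : ZMod 4).val = 2 from rfl]

theorem pairPow_zero_two : pairPow x y ((0, 2) : ZMod 4 × ZMod 4) = y ^ 2 := by
  simp [pairPow, show (2 : ZMod 4).val = 2 from rfl]

variable [NeZero n]

theorem pairPow_add (hx : x ^ n = 1) (hy : y ^ n = 1) (hxy : Commute x y)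
    (u v : ZMod n × ZMod n) : pairPow x y (u + v) = pairPow x y u * pairPow x y v := by
  simp only [pairPow, Prod.fst_add, Prod.snd_add, pow_zmod_val_add hx, pow_zmod_val_add hy,
    mul_assoc]
  exact congrArg _ ((hxy.pow_pow _ _).left_comm _)

theorem pairPow_nsmul (hx : x ^ n = 1) (hy : y ^ n = 1) (hxy : Commute x y) (m : ℕ)
    (u : ZMod n × ZMod n) : pairPow x y (m • u) = pairPow x y u ^ m := by
  induction m with
  | zero => simp
  | succ m ih => rw [succ_nsmul, pairPow_add hx hy hxy, ih, pow_succ]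

theorem pairPow_neg (hx : x ^ n = 1) (hy : y ^ n = 1) (hxy : Commute x y)
    (u : ZMod n × ZMod n) : pairPow x y (-u) = (pairPow x y u)⁻¹ := by
  rw [eq_inv_iff_mul_eq_one, ← pairPow_add hx hy hxy, neg_add_cancel, pairPow_zero]

theorem conj_pairPow (hx : x ^ n = 1) (hy : y ^ n = 1) (hxy : Commute x y) {g : G}
    {v w : ZMod n × ZMod n} (hgx : g⁻¹ * x * g = pairPow x y v)
    (hgy : g⁻¹ * y * g = pairPow x y w) (u : ZMod n × ZMod n) :
    g⁻¹ * pairPow x y u * g = pairPow x y (u.1.val • v + u.2.val • w) := by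
  have hconj (z : G) : g⁻¹ * z * g = MulAut.conj g⁻¹ z := by simp
  simp only [hconj] at hgx hgy ⊢
  rw [pairPow_add hx hy hxy, pairPow_nsmul hx hy hxy, pairPow_nsmul hx hy hxy, ← hgx, ← hgy]
  simp only [pairPow, map_mul, map_pow]

theorem conj_pairPow_pairPow (hx : x ^ n = 1) (hy : y ^ n = 1) (hxy : Commute x y)
    (u v : ZMod n × ZMod n) :
    (pairPow x y v)⁻¹ * pairPow x y u * pairPow x y v = pairPow x y u := by
  rw [mul_assoc, inv_mul_eq_iff_eq_mul, ← pairPow_add hx hy hxy, ← pairPow_add hx hy hxy,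
    add_comm]

end PairPow
end General

namespace G443

/-- Conjugation by `b` on `⟨x, y⟩`, in the coordinates of `pairPow x y`. -/
def rot (u : ZMod 4 × ZMod 4) : ZMod 4 × ZMod 4 := (-u.2, u.1 - u.2)

/-- Conjugation by `b ^ l * a ^ k` on `⟨x, y⟩`. -/
def conjAction (l : ZMod 3) (k : ZMod 2) : ZMod 4 × ZMod 4 → ZMod 4 × ZMod 4 :=
  Prod.swap^[k.val] ∘ rot^[l.val]

theorem two_zero_and_zero_two_of_ne_zero {P : ZMod 4 × ZMod 4 → Prop}
    (hadd : ∀ u, P u → P (u + u)) (hrot : ∀ u, P u → P (rot u)) {u : ZMod 4 × ZMod 4}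
    (hu : u ≠ 0) (hPu : P u) : P (2, 0) ∧ P (0, 2) := by
  have hP : ∀ v ∈ [u, rot u, rot (rot u), u + u, rot (u + u), rot (rot (u + u))], P v := by
    simp only [List.forall_mem_cons, List.not_mem_nil, IsEmpty.forall_iff, implies_true, and_true]
    exact ⟨hPu, hrot _ hPu, hrot _ (hrot _ hPu), hadd _ hPu, hrot _ (hadd _ hPu),
      hrot _ (hrot _ (hadd _ hPu))⟩
  have hmem : ∀ u : ZMod 4 × ZMod 4, u ≠ 0 →
      (2, 0) ∈ [u, rot u, rot (rot u), u + u, rot (u + u), rot (rot (u + u))] ∧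
      (0, 2) ∈ [u, rot u, rot (rot u), u + u, rot (u + u), rot (rot (u + u))] := by
    decide
  exact ⟨hP _ (hmem u hu).1, hP _ (hmem u hu).2⟩

theorem exists_conjAction_ne {l : ZMod 3} {k : ZMod 2} (hlk : ¬(l = 0 ∧ k = 0)) :
    ∃ e, conjAction l k e ≠ e := by
  revert l k; decide

variable {G : Type*} [Group G]

def normalForm (x y a b : G) (u : ZMod 4 × ZMod 4) (l : ZMod 3) (k : ZMod 2) : G :=
  pairPow x y u * b ^ l.val * a ^ k.val

structure Relations (x y a b : G) : Prop where
  hx : x ^ 4 = 1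
  hy : y ^ 4 = 1
  hb : b ^ 3 = 1
  ha : a ^ 2 = 1
  hxy : x * y = y * x
  hxa : a⁻¹ * x * a = y
  hxb : b⁻¹ * x * b = y
  hyb : b⁻¹ * y * b = x⁻¹ * y⁻¹
  hba : a⁻¹ * b * a = b⁻¹

namespace Relations

variable {x y a b : G}

theorem pairPow_add (R : Relations x y a b) (u v : ZMod 4 × ZMod 4) :
    pairPow x y (u + v) = pairPow x y u * pairPow x y v :=
  _root_.pairPow_add R.hx R.hy R.hxy u v

theorem a_inv (R : Relations x y a b) : a⁻¹ = a :=
  inv_eq_of_mul_eq_one_left (by rw [← sq, R.ha])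

theorem b_inv (R : Relations x y a b) : b⁻¹ = b ^ 2 :=
  inv_eq_of_mul_eq_one_left (by rw [← pow_succ, R.hb])

theorem conj_a (R : Relations x y a b) (u : ZMod 4 × ZMod 4) :
    a⁻¹ * pairPow x y u * a = pairPow x y u.swap := by
  have hya : a⁻¹ * y * a = x := by
    calc a⁻¹ * y * a = (a ^ 2)⁻¹ * x * a ^ 2 := by rw [← R.hxa, sq]; group
      _ = x := by rw [R.ha]; group
  rw [conj_pairPow R.hx R.hy R.hxy (v := (0, 1)) (w := (1, 0)) (by rw [R.hxa, pairPow_zero_one])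
    (by rw [hya, pairPow_one_zero])]
  congr 1
  revert u; decide

theorem conj_b (R : Relations x y a b) (u : ZMod 4 × ZMod 4) :
    b⁻¹ * pairPow x y u * b = pairPow x y (rot u) := by
  have hyb : b⁻¹ * y * b = pairPow x y (-((1, 1) : ZMod 4 × ZMod 4)) := by
    rw [R.hyb, _root_.pairPow_neg R.hx R.hy R.hxy, pairPow, show (1 : ZMod 4).val = 1 from rfl,
      pow_one, pow_one, mul_inv_rev, (Commute.inv_inv R.hxy).eq]
  rw [conj_pairPow R.hx R.hy R.hxy (by rw [R.hxb, pairPow_zero_one]) hyb]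
  congr 1
  revert u; decide

theorem a_mul_pairPow (R : Relations x y a b) (u : ZMod 4 × ZMod 4) :
    a * pairPow x y u = pairPow x y u.swap * a := by
  rw [← R.conj_a, R.a_inv, mul_assoc, mul_assoc, ← sq, R.ha, mul_one]

theorem b_mul_pairPow (R : Relations x y a b) (u : ZMod 4 × ZMod 4) :
    b * pairPow x y u = pairPow x y (rot (rot u)) * b := by
  have h := conj_pow_eq_of_conj R.conj_b 2 u
  rwa [← R.b_inv, inv_inv, mul_inv_eq_iff_eq_mul] at h

theorem a_mul_pow_b (R : Relations x y a b) (l : ZMod 3) :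
    a * b ^ l.val = b ^ (-l).val * a := by
  have h := conj_pow (a := a⁻¹) (b := b) (i := l.val)
  rw [inv_inv] at h
  rw [pow_zmod_val_neg R.hb, ← inv_pow, ← R.hba, h, R.a_inv, mul_assoc _ a a, ← sq, R.ha,
    mul_one]

theorem exists_normalForm (R : Relations x y a b) (hgen : closure {x, y, a, b} = ⊤) (g : G) :
    ∃ u l k, g = normalForm x y a b u l k := by
  have hfin : ∀ t ∈ ({x, y, a, b} : Set G), IsOfFinOrder t := by
    rintro t (rfl | rfl | rfl | rfl) <;> rw [isOfFinOrder_iff_pow_eq_one]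
    exacts [⟨4, by norm_num, R.hx⟩, ⟨4, by norm_num, R.hy⟩, ⟨2, by norm_num, R.ha⟩,
      ⟨3, by norm_num, R.hb⟩]
  have hg : g ∈ Submonoid.closure {x, y, a, b} := by
    rw [← closure_toSubmonoid_of_isOfFinOrder hfin, hgen]; trivial
  induction hg using Submonoid.closure_induction_left with
  | one => exact ⟨0, 0, 0, by simp [normalForm]⟩
  | mul_left t ht g _ ih =>
    obtain ⟨u, l, k, rfl⟩ := ih
    simp only [normalForm, ← mul_assoc]
    rcases ht with rfl | rfl | rfl | rfl
    · exact ⟨(1, 0) + u, l, k, by rw [R.pairPow_add, pairPow_one_zero]⟩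
    · exact ⟨(0, 1) + u, l, k, by rw [R.pairPow_add, pairPow_zero_one]⟩
    · refine ⟨u.swap, -l, 1 + k, ?_⟩
      rw [R.a_mul_pairPow, mul_assoc _ t, R.a_mul_pow_b, pow_zmod_val_add R.ha]
      simp [show (1 : ZMod 2).val = 1 from rfl, mul_assoc]
    · refine ⟨rot (rot u), 1 + l, k, ?_⟩
      rw [R.b_mul_pairPow, pow_zmod_val_add R.hb]
      simp [show (1 : ZMod 3).val = 1 from rfl, mul_assoc]

theorem conj_normalForm (R : Relations x y a b) (u v : ZMod 4 × ZMod 4) (l : ZMod 3)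
    (k : ZMod 2) :
    (normalForm x y a b u l k)⁻¹ * pairPow x y v * normalForm x y a b u l k =
      pairPow x y (conjAction l k v) := by
  have hconj (g h z : G) : (g * h)⁻¹ * z * (g * h) = h⁻¹ * (g⁻¹ * z * g) * h := by group
  rw [normalForm, hconj, hconj, conj_pairPow_pairPow R.hx R.hy R.hxy,
    conj_pow_eq_of_conj R.conj_b, conj_pow_eq_of_conj R.conj_a, conjAction, Function.comp_apply]

theorem exists_ne_zero_pairPow_mem (R : Relations x y a b)
    (hgen : closure {x, y, a, b} = ⊤) {N : Subgroup G} (hN : N.Normal) (hN1 : N ≠ ⊥) :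
    ∃ u ≠ (0 : ZMod 4 × ZMod 4), pairPow x y u ∈ N := by
  obtain ⟨g, hgN, hg1⟩ := N.bot_or_exists_ne_one.resolve_left hN1
  obtain ⟨u, l, k, rfl⟩ := R.exists_normalForm hgen g
  by_cases hlk : l = 0 ∧ k = 0
  · obtain ⟨rfl, rfl⟩ := hlk
    have hu : normalForm x y a b u 0 0 = pairPow x y u := by simp [normalForm]
    rw [hu] at hgN hg1
    exact ⟨u, by rintro rfl; exact hg1 (pairPow_zero (n := 4)), hgN⟩
  · -- the commutator of `g` with a vector it moves is a nonzero vector of `N`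
    obtain ⟨e, he⟩ := exists_conjAction_ne hlk
    refine ⟨-e + conjAction l k e, fun h ↦ he (neg_add_eq_zero.1 h).symm, ?_⟩
    have hcomm := mul_mem (hN.conj_mem _ (inv_mem hgN) (pairPow x y e)⁻¹) hgN
    rwa [inv_inv, mul_assoc, mul_assoc, ← mul_assoc _ _ (normalForm x y a b u l k),
      R.conj_normalForm, ← _root_.pairPow_neg R.hx R.hy R.hxy, ← R.pairPow_add] at hcomm

theorem pairPow_add_self_mem_closure_sq (R : Relations x y a b) (w : ZMod 4 × ZMod 4) :
    pairPow x y (w + w) ∈ closure {x ^ 2, y ^ 2} := by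
  have hw : w + w = w.1.val • ((2, 0) : ZMod 4 × ZMod 4) + w.2.val • (0, 2) := by
    revert w; decide
  rw [hw, R.pairPow_add, pairPow_nsmul R.hx R.hy R.hxy, pairPow_nsmul R.hx R.hy R.hxy,
    pairPow_two_zero, pairPow_zero_two]
  exact mul_mem (pow_mem (subset_closure (by simp)) _) (pow_mem (subset_closure (by simp)) _)

theorem normal_closure_sq (R : Relations x y a b) (hgen : closure {x, y, a, b} = ⊤) :
    (closure {x ^ 2, y ^ 2}).Normal := by
  refine closure_normal_of_conj_mem fun g n hn ↦ ?_
  obtain ⟨u, l, k, rfl⟩ := R.exists_normalForm hgen g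
  obtain ⟨v, rfl⟩ : ∃ v : ZMod 4 × ZMod 4, pairPow x y (v + v) = n := by
    rcases hn with rfl | rfl
    exacts [⟨(1, 0), by rw [R.pairPow_add, pairPow_one_zero, sq]⟩,
      ⟨(0, 1), by rw [R.pairPow_add, pairPow_zero_one, sq]⟩]
  have hadd : ∀ l k (v : ZMod 4 × ZMod 4),
      conjAction l k (v + v) = conjAction l k v + conjAction l k v := by
    decide
  rw [R.conj_normalForm, hadd]
  exact R.pairPow_add_self_mem_closure_sq _

end Relations

end G443

theorem stmt6_general (G : Type*) [Group G] (x y a b : G)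
    (hx : x ^ 4 = 1) (hy : y ^ 4 = 1) (hb : b ^ 3 = 1) (ha : a ^ 2 = 1)
    (hxy : x * y = y * x) (hxa : a⁻¹ * x * a = y) (hxb : b⁻¹ * x * b = y)
    (hyb : b⁻¹ * y * b = x⁻¹ * y⁻¹) (hba : a⁻¹ * b * a = b⁻¹)
    (hgen : Subgroup.closure {x, y, a, b} = ⊤) :
    (Subgroup.closure {x ^ 2, y ^ 2}).Normal ∧
    ∀ N : Subgroup G, N.Normal → N ≠ ⊥ → Subgroup.closure {x ^ 2, y ^ 2} ≤ N := by
  have R : G443.Relations x y a b := ⟨hx, hy, hb, ha, hxy, hxa, hxb, hyb, hba⟩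
  refine ⟨R.normal_closure_sq hgen, fun N hN hN1 ↦ ?_⟩
  obtain ⟨u, hu, huN⟩ := R.exists_ne_zero_pairPow_mem hgen hN hN1
  obtain ⟨hx2, hy2⟩ := G443.two_zero_and_zero_two_of_ne_zero (P := (pairPow x y · ∈ N))
    (fun v hv ↦ by rw [R.pairPow_add]; exact mul_mem hv hv)
    (fun v hv ↦ by rw [← R.conj_b]; exact hN.conj_mem' _ hv b) hu huN
  rw [closure_le]
  rintro _ (rfl | rfl)
  exacts [(pairPow_two_zero (y := y)) ▸ hx2, (pairPow_zero_two (x := x)) ▸ hy2]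

theorem stmt6 (G : Type*) [Group G] (x y a b : G)
    (hx : x ^ 4 = 1) (hy : y ^ 4 = 1) (hb : b ^ 3 = 1) (ha : a ^ 2 = 1)
    (hxy : x * y = y * x) (hxa : a⁻¹ * x * a = y) (hxb : b⁻¹ * x * b = y)
    (hyb : b⁻¹ * y * b = x⁻¹ * y⁻¹) (hba : a⁻¹ * b * a = b⁻¹)
    (hgen : Subgroup.closure {x, y, a, b} = ⊤) (hcard : Nat.card G = 96) :
    (Subgroup.closure {x ^ 2, y ^ 2}).Normal ∧
    ∀ N : Subgroup G, N.Normal → N ≠ ⊥ → Subgroup.closure {x ^ 2, y ^ 2} ≤ N :=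
  stmt6_general G x y a b hx hy hb ha hxy hxa hxb hyb hba hgen
end

section
/- In G = G(4,4,3) ≅ (C₄ × C₄) ⋊ Sym(3), every element of the cosets ⟨x,y⟩b and ⟨x,y⟩b² has order 3, and every other element of G has order dividing 8. -/
open Multiplicative

/-!
The base `N = ⟨x, y⟩` is abelian of exponent 4 and normal, and `G ⧸ N` is generated by the
images of `a` and `b`, which satisfy the relations of `S₃`. So every element of `G ⧸ N` other
than the images of `b` and `b²` squares to `1`: outside `N b ∪ N b²` we get `g² ∈ N`, `g⁸ = 1`.

On `N`, conjugation by `b⁻¹` sends `xⁱ yʲ` to `x⁻ʲ yⁱ⁻ʲ`; the three iterates of this order-3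
automorphism multiply to `1`, hence every element `b h` of `N b = b N` satisfies
`(b h)³ = b³ · h^(b²) · h^b · h = 1`. Moreover `b ∉ N`, since otherwise `b = 1`, which
collapses `G` to `⟨a⟩`, against `|G| = 96`. Elements of `N b²` are inverses of elements of `N b`.
-/

open Subgroup

namespace Commute

variable {G : Type*} [Group G] {x y : G}

theorem zpow_mul_zpow_mul_zpow_mul_zpow (hxy : Commute x y) (i j k l : ℤ) :
    x ^ i * y ^ j * (x ^ k * y ^ l) = x ^ (i + k) * y ^ (j + l) := by
  rw [zpow_add, zpow_add, mul_assoc, ← mul_assoc (y ^ j), (hxy.symm.zpow_zpow j k).eq,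
    mul_assoc, ← mul_assoc]

theorem exists_zpow_mul_zpow_of_mem_closure_pair (hxy : Commute x y) {h : G}
    (hh : h ∈ closure {x, y}) : ∃ i j : ℤ, x ^ i * y ^ j = h := by
  induction hh using closure_induction with
  | mem g hg =>
    rcases hg with rfl | rfl
    exacts [⟨1, 0, by simp⟩, ⟨0, 1, by simp⟩]
  | one => exact ⟨0, 0, by simp⟩
  | mul g k _ _ ihg ihk =>
    obtain ⟨i, j, rfl⟩ := ihg
    obtain ⟨k, l, rfl⟩ := ihk
    exact ⟨i + k, j + l, (hxy.zpow_mul_zpow_mul_zpow_mul_zpow i j k l).symm⟩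
  | inv g _ ih =>
    obtain ⟨i, j, rfl⟩ := ih
    refine ⟨-i, -j, (inv_eq_of_mul_eq_one_left ?_).symm⟩
    rw [hxy.zpow_mul_zpow_mul_zpow_mul_zpow, neg_add_cancel, neg_add_cancel, zpow_zero,
      zpow_zero, one_mul]

theorem pow_eq_one_of_mem_closure_pair (hxy : Commute x y) {n : ℕ} (hx : x ^ n = 1)
    (hy : y ^ n = 1) {h : G} (hh : h ∈ closure {x, y}) : h ^ n = 1 := by
  obtain ⟨i, j, rfl⟩ := hxy.exists_zpow_mul_zpow_of_mem_closure_pair hh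
  rw [(hxy.zpow_zpow i j).mul_pow, ← zpow_natCast, ← zpow_natCast, ← zpow_mul, ← zpow_mul,
    mul_comm, zpow_mul, mul_comm, zpow_mul, zpow_natCast, zpow_natCast, hx, hy, one_zpow,
    one_zpow, one_mul]

end Commute

theorem Subgroup.mem_normalizer_closure_of_conj_mem {G : Type*} [Group G] [Finite G]
    {s : Set G} {g : G} (h : ∀ t ∈ s, g * t * g⁻¹ ∈ closure s) :
    g ∈ normalizer (closure s : Set G) :=
  mem_normalizer_fintype fun _ hn =>
    (closure_le ((closure s).comap (MulAut.conj g).toMonoidHom)).2 h hn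

theorem QuotientGroup.mk_eq_iff_exists_mem_eq_mul {G : Type*} [Group G] {N : Subgroup G}
    [N.Normal] {g c : G} : (g : G ⧸ N) = c ↔ ∃ h ∈ N, g = h * c := by
  constructor
  · intro e
    refine ⟨g * c⁻¹, ?_, by group⟩
    rw [← eq_one_iff, mk_mul, mk_inv, e, mul_inv_cancel]
  · rintro ⟨h, hh, rfl⟩
    rw [mk_mul, (eq_one_iff h).2 hh, one_mul]

section Dihedral

variable {Q : Type*} [Group Q] {A B : Q}

theorem mul_zpow_eq_zpow_neg_mul (hA : A ^ 2 = 1) (hBA : A⁻¹ * B * A = B⁻¹) (k : ℤ) :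
    A * B ^ k = B ^ (-k) * A := by
  have hAA : A * A = 1 := by rw [← sq, hA]
  have hconj : B ^ (-k) = A⁻¹ * B ^ k * A := by
    simpa [zpow_neg, ← inv_zpow, ← hBA] using conj_zpow (a := A⁻¹) (b := B) (i := k)
  rw [hconj, inv_eq_of_mul_eq_one_left hAA, mul_assoc _ A A, hAA, mul_one]

theorem exists_eq_zpow_or_eq_zpow_mul_of_closure_eq_top (hA : A ^ 2 = 1)
    (hBA : A⁻¹ * B * A = B⁻¹) (hgen : closure {A, B} = ⊤) (q : Q) :
    ∃ k : ℤ, q = B ^ k ∨ q = B ^ k * A := by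
  have hAB := mul_zpow_eq_zpow_neg_mul hA hBA
  have hAA : A * A = 1 := by rw [← sq, hA]
  induction (hgen ▸ mem_top q : q ∈ closure {A, B}) using closure_induction with
  | mem g hg =>
    rcases hg with rfl | rfl
    exacts [⟨0, by simp⟩, ⟨1, by simp⟩]
  | one => exact ⟨0, by simp⟩
  | mul g h _ _ ihg ihh =>
    obtain ⟨k, rfl | rfl⟩ := ihg <;> obtain ⟨l, rfl | rfl⟩ := ihh
    · exact ⟨k + l, .inl (zpow_add ..).symm⟩
    · exact ⟨k + l, .inr (by rw [zpow_add, mul_assoc])⟩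
    · refine ⟨k - l, .inr ?_⟩
      rw [mul_assoc, hAB, ← mul_assoc, ← zpow_add, sub_eq_add_neg]
    · refine ⟨k - l, .inl ?_⟩
      rw [mul_assoc, ← mul_assoc A, hAB]
      simp only [mul_assoc, hAA, mul_one]
      rw [← zpow_add, sub_eq_add_neg]
  | inv g _ ih =>
    obtain ⟨k, rfl | rfl⟩ := ih
    · exact ⟨-k, .inl (zpow_neg ..).symm⟩
    · refine ⟨k, .inr ?_⟩
      rw [mul_inv_rev, ← zpow_neg, inv_eq_of_mul_eq_one_left hAA, hAB, neg_neg]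

theorem sq_eq_one_of_ne_of_ne_sq (hA : A ^ 2 = 1) (hB : B ^ 3 = 1) (hBA : A⁻¹ * B * A = B⁻¹)
    (hgen : closure {A, B} = ⊤) {q : Q} (h₁ : q ≠ B) (h₂ : q ≠ B ^ 2) : q ^ 2 = 1 := by
  obtain ⟨k, rfl | rfl⟩ := exists_eq_zpow_or_eq_zpow_mul_of_closure_eq_top hA hBA hgen q
  · rw [zpow_eq_zpow_emod k (n := 3) (mod_cast hB)] at h₁ h₂ ⊢
    obtain hk | hk | hk : k % 3 = 0 ∨ k % 3 = 1 ∨ k % 3 = 2 := by omega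
    · simp [hk]
    · exact absurd (by rw [hk, zpow_one]) h₁
    · exact absurd (by rw [hk]; exact zpow_ofNat B 2) h₂
  · rw [sq, mul_assoc, ← mul_assoc A, mul_zpow_eq_zpow_neg_mul hA hBA, mul_assoc, ← sq, hA,
      mul_one, ← zpow_add, add_neg_cancel, zpow_zero]

end Dihedral

namespace G443

variable {G : Type*} [Group G] {x y a b : G}

theorem inv_mul_zpow_mul_zpow_mul (hxy : Commute x y) (hxb : b⁻¹ * x * b = y)
    (hyb : b⁻¹ * y * b = x⁻¹ * y⁻¹) (i j : ℤ) :
    b⁻¹ * (x ^ i * y ^ j) * b = x ^ (-j) * y ^ (i - j) := by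
  have h := map_mul (MulAut.conj b⁻¹) (x ^ i) (y ^ j)
  simp only [map_zpow, MulAut.conj_apply, inv_inv] at h
  rw [h, hxb, hyb, hxy.inv_inv.mul_zpow, inv_zpow', inv_zpow', ← mul_assoc,
    ← (hxy.zpow_zpow (-j) i).eq, mul_assoc, ← zpow_add, ← sub_eq_add_neg]

theorem mul_zpow_mul_zpow_pow_three (hxy : Commute x y) (hb : b ^ 3 = 1)
    (hxb : b⁻¹ * x * b = y) (hyb : b⁻¹ * y * b = x⁻¹ * y⁻¹) (i j : ℤ) :
    (b * (x ^ i * y ^ j)) ^ 3 = 1 := by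
  have expand : ∀ h : G, (b * h) ^ 3 = b ^ 3 * (b⁻¹ * (b⁻¹ * h * b) * b) * (b⁻¹ * h * b) * h :=
    fun h => by simp only [pow_succ, pow_zero, one_mul]; group
  rw [expand, hb, one_mul, inv_mul_zpow_mul_zpow_mul hxy hxb hyb,
    inv_mul_zpow_mul_zpow_mul hxy hxb hyb, hxy.zpow_mul_zpow_mul_zpow_mul_zpow,
    hxy.zpow_mul_zpow_mul_zpow_mul_zpow]
  ring_nf
  simp

theorem ne_one_of_two_lt_card (hy : y ^ 4 = 1) (ha : a ^ 2 = 1) (hxb : b⁻¹ * x * b = y)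
    (hyb : b⁻¹ * y * b = x⁻¹ * y⁻¹) (hgen : closure {x, y, a, b} = ⊤)
    (hcard : 2 < Nat.card G) : b ≠ 1 := by
  rintro rfl
  obtain rfl : x = y := by simpa using hxb
  have hx3 : x ^ 3 = 1 := by
    simp only [inv_one, one_mul, mul_one] at hyb
    calc x ^ 3 = x * x * (x⁻¹ * x⁻¹) := by rw [← hyb, pow_three, mul_assoc]
      _ = 1 := by group
  obtain rfl : x = 1 := (pow_eq_one_iff_of_coprime (by norm_num : Nat.Coprime 3 4)).1 ⟨hx3, hy⟩
  have hzpow : ∀ g, g ∈ zpowers a := by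
    simpa [zpowers_eq_closure, closure_insert_one, Set.pair_comm a 1, eq_top_iff'] using hgen
  have := Nat.le_of_dvd two_pos (orderOf_dvd_of_pow_eq_one ha)
  rw [orderOf_eq_card_of_forall_mem_zpowers hzpow] at this
  omega

theorem normal_closure_pair [Finite G] (ha : a ^ 2 = 1) (hxa : a⁻¹ * x * a = y)
    (hxb : b⁻¹ * x * b = y) (hyb : b⁻¹ * y * b = x⁻¹ * y⁻¹)
    (hgen : closure {x, y, a, b} = ⊤) : (closure {x, y}).Normal := by
  have hxN : x ∈ closure {x, y} := subset_closure (by simp)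
  have hyN : y ∈ closure {x, y} := subset_closure (by simp)
  have hya : a⁻¹ * y * a = x := by
    rw [← hxa, show a⁻¹ * (a⁻¹ * x * a) * a = (a * a)⁻¹ * x * (a * a) by group, ← sq, ha,
      inv_one, one_mul, mul_one]
  rw [← normalizer_eq_top_iff, eq_top_iff, ← hgen, closure_le]
  rintro g (rfl | rfl | rfl | rfl)
  · exact le_normalizer hxN
  · exact le_normalizer hyN
  · refine inv_mem_iff.1 (mem_normalizer_closure_of_conj_mem ?_)
    rintro t (rfl | rfl) <;> simp only [inv_inv, hxa, hya, hxN, hyN]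
  · refine inv_mem_iff.1 (mem_normalizer_closure_of_conj_mem ?_)
    rintro t (rfl | rfl) <;> simp only [inv_inv, hxb, hyb, hyN]
    exact mul_mem (inv_mem hxN) (inv_mem hyN)

theorem closure_mk_pair_eq_top [(closure {x, y}).Normal] (hgen : closure {x, y, a, b} = ⊤) :
    closure ({↑a, ↑b} : Set (G ⧸ closure {x, y})) = ⊤ := by
  have hx : (x : G ⧸ closure {x, y}) = 1 :=
    (QuotientGroup.eq_one_iff x).2 (subset_closure (by simp))
  have hy : (y : G ⧸ closure {x, y}) = 1 :=
    (QuotientGroup.eq_one_iff y).2 (subset_closure (by simp))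
  rw [← map_top_of_surjective _ (QuotientGroup.mk'_surjective _), ← hgen, MonoidHom.map_closure]
  simp [Set.image_insert_eq, hx, hy, closure_insert_one]

theorem orderOf_eq_three_of_mk_eq (hxy : Commute x y) (hb : b ^ 3 = 1) (hxb : b⁻¹ * x * b = y)
    (hyb : b⁻¹ * y * b = x⁻¹ * y⁻¹) [(closure {x, y}).Normal] (hbN : b ∉ closure {x, y})
    {g : G} (hg : (g : G ⧸ closure {x, y}) = b) : orderOf g = 3 := by
  have hgN : b⁻¹ * g ∈ closure {x, y} := by
    rw [← QuotientGroup.eq_one_iff, QuotientGroup.mk_mul, QuotientGroup.mk_inv, hg,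
      inv_mul_cancel]
  obtain ⟨i, j, hij⟩ := hxy.exists_zpow_mul_zpow_of_mem_closure_pair hgN
  have : Fact (Nat.Prime 3) := ⟨Nat.prime_three⟩
  refine orderOf_eq_prime ?_ ?_
  · rw [← mul_inv_cancel_left b g, ← hij, mul_zpow_mul_zpow_pow_three hxy hb hxb hyb]
  · rintro rfl
    exact hbN ((QuotientGroup.eq_one_iff b).1 hg.symm)

theorem pow_eight_eq_one_of_mk_ne (hxy : Commute x y) (hx : x ^ 4 = 1) (hy : y ^ 4 = 1)
    (hb : b ^ 3 = 1) (ha : a ^ 2 = 1) (hba : a⁻¹ * b * a = b⁻¹) [(closure {x, y}).Normal]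
    (hgen : closure {x, y, a, b} = ⊤) {g : G} (h₁ : (g : G ⧸ closure {x, y}) ≠ b)
    (h₂ : (g : G ⧸ closure {x, y}) ≠ ↑(b ^ 2)) : g ^ 8 = 1 := by
  have hg : (g : G ⧸ closure {x, y}) ^ 2 = 1 := by
    refine sq_eq_one_of_ne_of_ne_sq ?_ ?_ ?_ (closure_mk_pair_eq_top hgen) h₁ h₂
    · rw [← QuotientGroup.mk_pow, ha, QuotientGroup.mk_one]
    · rw [← QuotientGroup.mk_pow, hb, QuotientGroup.mk_one]
    · rw [← QuotientGroup.mk_inv, ← QuotientGroup.mk_mul, ← QuotientGroup.mk_mul, hba,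
        QuotientGroup.mk_inv]
  rw [← QuotientGroup.mk_pow, QuotientGroup.eq_one_iff] at hg
  rw [show 8 = 2 * 4 from rfl, pow_mul, hxy.pow_eq_one_of_mem_closure_pair hx hy hg]

end G443

theorem stmt7 (G : Type*) [Group G] (x y a b : G)
    (hx : x ^ 4 = 1) (hy : y ^ 4 = 1) (hb : b ^ 3 = 1) (ha : a ^ 2 = 1)
    (hxy : x * y = y * x) (hxa : a⁻¹ * x * a = y) (hxb : b⁻¹ * x * b = y)
    (hyb : b⁻¹ * y * b = x⁻¹ * y⁻¹) (hba : a⁻¹ * b * a = b⁻¹)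
    (hgen : Subgroup.closure {x, y, a, b} = ⊤) (hcard : Nat.card G = 96) :
    (∀ g : G, (∃ h ∈ Subgroup.closure {x, y}, g = h * b) → orderOf g = 3) ∧
    (∀ g : G, (∃ h ∈ Subgroup.closure {x, y}, g = h * b ^ 2) → orderOf g = 3) ∧
    (∀ g : G, ¬(∃ h ∈ Subgroup.closure {x, y}, g = h * b) →
      ¬(∃ h ∈ Subgroup.closure {x, y}, g = h * b ^ 2) → orderOf g ∣ 8) := by
  have : Finite G := Nat.finite_of_card_ne_zero (by rw [hcard]; norm_num)
  have : (closure {x, y}).Normal := G443.normal_closure_pair ha hxa hxb hyb hgen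
  have hxy : Commute x y := hxy
  have hbN : b ∉ closure {x, y} := fun hbN =>
    G443.ne_one_of_two_lt_card hy ha hxb hyb hgen (by rw [hcard]; norm_num) <|
      (pow_eq_one_iff_of_coprime (by norm_num : Nat.Coprime 3 4)).1
        ⟨hb, hxy.pow_eq_one_of_mem_closure_pair hx hy hbN⟩
  simp_rw [← QuotientGroup.mk_eq_iff_exists_mem_eq_mul]
  refine ⟨fun g => G443.orderOf_eq_three_of_mk_eq hxy hb hxb hyb hbN, fun g hg => ?_,
    fun g h₁ h₂ => orderOf_dvd_of_pow_eq_one <|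
      G443.pow_eight_eq_one_of_mk_ne hxy hx hy hb ha hba hgen h₁ h₂⟩
  rw [← orderOf_inv]
  refine G443.orderOf_eq_three_of_mk_eq hxy hb hxb hyb hbN ?_
  rw [QuotientGroup.mk_inv, hg, ← QuotientGroup.mk_inv,
    inv_eq_of_mul_eq_one_right (by rw [← pow_succ, hb])]
end

section
/- Every core-free subgroup L of G = G(4,4,3) (a group of order 96) has index at least 12 in G. -/
open Multiplicative

/-- Sym(n) acting on the base group (C_m)^n by permuting coordinates. -/
def wreathAut (m n : ℕ) : Equiv.Perm (Fin n) →* MulAut (Fin n → Cyc m) where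
  toFun σ :=
    { toFun := fun θ => θ ∘ σ.symm
      invFun := fun θ => θ ∘ σ
      left_inv := fun θ => by ext i; simp
      right_inv := fun θ => by ext i; simp
      map_mul' := fun θ₁ θ₂ => rfl }
  map_one' := by ext θ i; simp; rfl
  map_mul' := fun σ τ => by ext θ i; rfl

/-- The wreath product C_m ≀ Sym(n). -/
abbrev Wr (m n : ℕ) := SemidirectProduct (Fin n → Cyc m) (Equiv.Perm (Fin n)) (wreathAut m n)

/-- A(m,p,n) = {θ ∈ (C_m)^n | (θ₁⋯θₙ)^{m/p} = 1}. -/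
def Apn (m p n : ℕ) : Subgroup (Fin n → Cyc m) where
  carrier := {θ | (∏ i, θ i) ^ (m / p) = 1}
  one_mem' := by simp
  mul_mem' := by
    intro α β hα hβ
    simp only [Set.mem_setOf_eq, Pi.mul_apply] at *
    rw [Finset.prod_mul_distrib, mul_pow, hα, hβ, one_mul]
  inv_mem' := by
    intro α hα
    simp only [Set.mem_setOf_eq, Pi.inv_apply] at *
    rw [Finset.prod_inv_distrib, inv_pow, hα, inv_one]

lemma apn_act_mem {m p n : ℕ} (σ : Equiv.Perm (Fin n)) {θ : Fin n → Cyc m}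
    (hθ : θ ∈ Apn m p n) : wreathAut m n σ θ ∈ Apn m p n := by
  have : ∏ i, θ (σ.symm i) = ∏ i, θ i := Equiv.prod_comp σ.symm θ
  simpa [Apn, wreathAut, Subgroup.mem_mk, Set.mem_setOf_eq, Function.comp, this] using hθ

/-- G(m,p,n) = A(m,p,n) ⋊ Sym(n), realized inside C_m ≀ Sym(n). -/
def Gmpn (m p n : ℕ) : Subgroup (Wr m n) where
  carrier := {g | g.left ∈ Apn m p n}
  one_mem' := by
    show (1 : Wr m n).left ∈ Apn m p n
    rw [SemidirectProduct.one_left]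
    exact one_mem _
  mul_mem' := by
    intro g h hg hh
    show (g * h).left ∈ Apn m p n
    rw [SemidirectProduct.mul_left]
    exact mul_mem hg (apn_act_mem g.right hh)
  inv_mem' := by
    intro g hg
    show g⁻¹.left ∈ Apn m p n
    rw [SemidirectProduct.inv_left]
    exact apn_act_mem _ (inv_mem hg)

/-!
If `L` is core-free of index less than 12, the action on the cosets of `L` embeds `G` (of order
96) into the symmetric group of degree `[G : L]`, which forces `[G : L] = 8` and `|L| = 12`.
Let `A ≅ C₄ × C₄` be the kernel of `G → Sym(3)` and `K = L ∩ A`. Then `|K|` divides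
`gcd(12, 16) = 4`, and `K ≠ 1` because `|L|` does not divide `|Sym(3)|`. An element of order 3
of `L` normalises `K` but centralises no non-trivial element of `A`; as the automorphism groups
of `C₂` and `C₄` have order at most 2, `K` is not cyclic. So `K` is the Klein four-group of all
involutions of `A`, which is normal in `G`, contradicting `L` being core-free.
-/

open scoped Nat

/-- Unlike the derived instance, this one reduces under `decide`. -/
instance (m n : ℕ) : DecidableEq (Wr m n) := SemidirectProduct.equivProd.decidableEq

instance (m n : ℕ) [NeZero m] : Fintype (Wr m n) :=
  Fintype.ofEquiv _ SemidirectProduct.equivProd.symm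

instance (m p n : ℕ) : DecidablePred (· ∈ Gmpn m p n) := fun g =>
  decidable_of_iff ((∏ i, g.left i) ^ (m / p) = 1) Iff.rfl

section GroupTheory

variable {G : Type*} [Group G]

theorem Subgroup.index_normalCore_dvd_factorial (H : Subgroup G) [H.FiniteIndex] :
    H.normalCore.index ∣ H.index ! := by
  rw [normalCore_eq_ker, index_ker, index, ← Nat.card_perm]
  exact card_subgroup_dvd_card (MulAction.toPermHom G (G ⧸ H)).range

/-- Conjugation by `g` is `w ↦ w ^ k` with `w ^ (k ^ 3) = w`, and `k ^ 3 ≡ k (mod 4)` for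
odd `k` (for even `k` this forces `w = 1`). -/
theorem conj_eq_self_of_mem_zpowers {g w : G} (hg : g ^ 3 = 1) (hw : w ^ 4 = 1)
    (h : g * w * g⁻¹ ∈ Subgroup.zpowers w) : g * w * g⁻¹ = w := by
  have hw' : IsOfFinOrder w := isOfFinOrder_iff_pow_eq_one.mpr ⟨4, by norm_num, hw⟩
  obtain ⟨k, hk : w ^ k = g * w * g⁻¹⟩ := hw'.mem_powers_iff_mem_zpowers.mpr h
  have hconj (n : ℕ) : g ^ n * w * (g ^ n)⁻¹ = w ^ k ^ n := by
    induction n with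
    | zero => simp
    | succ n ih =>
      have hsplit :
          g ^ (n + 1) * w * (g ^ (n + 1))⁻¹ = g * (g ^ n * w * (g ^ n)⁻¹) * g⁻¹ := by
        group
      rw [hsplit, ih, ← conj_pow, ← hk, ← pow_mul, pow_succ']
  have hcube : w ^ ((k % 4) ^ 3 % 4) = w := by
    rw [← Nat.pow_mod, ← pow_eq_pow_mod _ hw, ← hconj 3, hg]
    group
  rw [← hk, pow_eq_pow_mod k hw]
  have hk4 : k % 4 < 4 := Nat.mod_lt _ (by norm_num)
  interval_cases k % 4 <;> norm_num at hcube ⊢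
  · exact hcube
  · subst hcube
    simp
  · exact hcube

end GroupTheory

namespace Gmpn

def toPerm (m p n : ℕ) : Gmpn m p n →* Equiv.Perm (Fin n) :=
  SemidirectProduct.rightHom.comp (Gmpn m p n).subtype

theorem card_dvd_factorial_of_inf_ker_toPerm_eq_bot {m p n : ℕ} {L : Subgroup (Gmpn m p n)}
    (hL : L ⊓ (toPerm m p n).ker = ⊥) : Nat.card L ∣ n ! := by
  have hinj : Function.Injective ((toPerm m p n).comp L.subtype) := by
    refine (injective_iff_map_eq_one _).mpr fun x hx => ?_
    have hx' : (x : Gmpn m p n) ∈ L ⊓ (toPerm m p n).ker := ⟨x.2, hx⟩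
    rw [hL, Subgroup.mem_bot] at hx'
    exact Subtype.ext hx'
  have h := Subgroup.card_dvd_of_injective _ hinj
  rwa [Nat.card_perm, Nat.card_fin] at h

section Computations

set_option maxRecDepth 10000

theorem card_four_four_three : Nat.card (Gmpn 4 4 3) = 96 := by
  rw [Nat.card_eq_fintype_card]
  decide

theorem card_ker_toPerm_four_four_three : Nat.card (toPerm 4 4 3).ker = 16 := by
  rw [Nat.card_eq_fintype_card]
  decide

theorem ncard_sq_eq_one_ker_toPerm_four_four_three :
    {a : Gmpn 4 4 3 | a ∈ (toPerm 4 4 3).ker ∧ a ^ 2 = 1}.ncard = 4 := by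
  rw [Set.ncard_eq_toFinset_card']
  decide

theorem conj_ne_self_of_mem_ker_toPerm_four_four_three :
    ∀ g a : Gmpn 4 4 3, g ^ 3 = 1 → g ≠ 1 → a ∈ (toPerm 4 4 3).ker → a ≠ 1 →
      g * a * g⁻¹ ≠ a := by
  decide

end Computations

section FourFourThree

variable {L K : Subgroup (Gmpn 4 4 3)}

theorem index_eq_eight_of_normalCore_eq_bot (hL : L.normalCore = ⊥) (h12 : L.index < 12) :
    L.index = 8 := by
  have hdvd : L.index ∣ 96 := card_four_four_three ▸ L.index_dvd_card
  have hfact : 96 ∣ L.index ! := by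
    have h := L.index_normalCore_dvd_factorial
    rwa [hL, Subgroup.index_bot, card_four_four_three] at h
  interval_cases L.index <;> revert hdvd hfact <;> decide

theorem card_eq_twelve_of_normalCore_eq_bot (hL : L.normalCore = ⊥) (h12 : L.index < 12) :
    Nat.card L = 12 := by
  have h := L.card_mul_index
  rw [index_eq_eight_of_normalCore_eq_bot hL h12, card_four_four_three] at h
  omega

theorem not_isCyclic_of_mem_normalizer (hKA : K ≤ (toPerm 4 4 3).ker) (hK4 : Nat.card K ∣ 4)
    (hK : K ≠ ⊥) {g : Gmpn 4 4 3} (hg : orderOf g = 3)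
    (hgK : g ∈ Subgroup.normalizer (K : Set (Gmpn 4 4 3))) : ¬IsCyclic K := by
  intro hcyc
  obtain ⟨w, rfl⟩ := (Subgroup.isCyclic_iff_exists_zpowers_eq_top K).mp hcyc
  have hw1 : w ≠ 1 := by
    rintro rfl
    exact hK Subgroup.zpowers_one_eq_bot
  have hw4 : w ^ 4 = 1 := orderOf_dvd_iff_pow_eq_one.mp (Nat.card_zpowers w ▸ hK4)
  have hg3 : g ^ 3 = 1 := orderOf_dvd_iff_pow_eq_one.mp (dvd_of_eq hg)
  have hg1 : g ≠ 1 := by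
    rintro rfl
    simp at hg
  have hwg : g * w * g⁻¹ ∈ Subgroup.zpowers w :=
    (Subgroup.mem_normalizer_iff.mp hgK w).mp (Subgroup.mem_zpowers w)
  exact conj_ne_self_of_mem_ker_toPerm_four_four_three g w hg3 hg1
    (hKA (Subgroup.mem_zpowers w)) hw1 (conj_eq_self_of_mem_zpowers hg3 hw4 hwg)

theorem normal_of_not_isCyclic (hKA : K ≤ (toPerm 4 4 3).ker) (hK4 : Nat.card K ∣ 4)
    (hK : K ≠ ⊥) (hcyc : ¬IsCyclic K) : K.Normal := by
  have hcard : Nat.card K = 4 := by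
    have hpos : 0 < Nat.card K := Nat.card_pos
    have hle := Nat.le_of_dvd (by norm_num) hK4
    interval_cases h : Nat.card K
    · exact absurd (Subgroup.card_eq_one.mp h) hK
    · exact absurd (isCyclic_of_prime_card (p := 2) h) hcyc
    · norm_num at hK4
    · rfl
  have hexp : Monoid.exponent K = 2 :=
    (not_isCyclic_iff_exponent_eq_prime Nat.prime_two hcard).mp hcyc
  have hsq : ∀ x ∈ K, x ^ 2 = 1 := fun x hx => by
    simpa [hexp] using congrArg Subtype.val (Monoid.pow_exponent_eq_one (⟨x, hx⟩ : K))
  have hKS : (K : Set (Gmpn 4 4 3)) = {a | a ∈ (toPerm 4 4 3).ker ∧ a ^ 2 = 1} :=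
    Set.eq_of_subset_of_ncard_le (fun x hx => ⟨hKA hx, hsq x hx⟩)
      (by rw [ncard_sq_eq_one_ker_toPerm_four_four_three, ← Nat.card_coe_set_eq,
        SetLike.coe_sort_coe, hcard]) (Set.toFinite _)
  refine ⟨fun x hx g => ?_⟩
  rw [← SetLike.mem_coe, hKS] at hx ⊢
  exact ⟨(toPerm 4 4 3).normal_ker.conj_mem x hx.1 g,
    by rw [conj_pow, hx.2, mul_one, mul_inv_cancel]⟩

end FourFourThree

end Gmpn

theorem stmt9 (L : Subgroup (Gmpn 4 4 3)) (hL : L.normalCore = ⊥) :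
    12 ≤ L.index := by
  by_contra! h12
  have hcard := Gmpn.card_eq_twelve_of_normalCore_eq_bot hL h12
  obtain ⟨g, hg⟩ := exists_prime_orderOf_dvd_card' (G := L) 3 (by rw [hcard]; norm_num)
  set K := L ⊓ (Gmpn.toPerm 4 4 3).ker
  have hK4 : Nat.card K ∣ 4 := Nat.dvd_gcd (m := 12) (n := 16)
    (hcard ▸ Subgroup.card_dvd_of_le inf_le_left)
    (Gmpn.card_ker_toPerm_four_four_three ▸ Subgroup.card_dvd_of_le inf_le_right)
  have hK : K ≠ ⊥ := fun hK =>
    absurd (hcard ▸ Gmpn.card_dvd_factorial_of_inf_ker_toPerm_eq_bot hK) (by decide)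
  have hgK : (g : Gmpn 4 4 3) ∈ Subgroup.normalizer (K : Set (Gmpn 4 4 3)) :=
    Subgroup.inf_normalizer_le_normalizer_inf
      ⟨L.le_normalizer g.2, by rw [Subgroup.normalizer_eq_top]; trivial⟩
  have : K.Normal := Gmpn.normal_of_not_isCyclic inf_le_right hK4 hK
    (Gmpn.not_isCyclic_of_mem_normalizer inf_le_right hK4 hK (by rwa [Subgroup.orderOf_coe]) hgK)
  exact hK (le_bot_iff.mp (hL ▸ Subgroup.normal_le_normalCore.mpr inf_le_left))
end
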